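/- arXiv:1810.01478 — 2 statements merged into one kernel-verified Lean document; each statement's English description precedes it below -/
import Mathlib

section
/- For every real β > 0, the largest eigenvalue λ_N of the Hankel matrix H_N satisfies λ_N ≃ (1/β)·Γ((2N−1)/β) as N → ∞, i.e. lim_{N→∞} β·λ_N / Γ((2N−1)/β) = 1. -/
/-!
The matrix `H_N = (μ_{i+j})` is a Hankel matrix with positive entries. Its largest eigenvalue lies
between its largest diagonal entry `μ_{2N-2}` and its largest row sum, which is at most
`μ_0 + ⋯ + μ_{2N-2}`. Log-convexity of `Γ` gives `Γ(x) / Γ(x + a) ≤ (x - 1)^(-a) → 0`, so the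
moments grow super-geometrically and `μ_0 + ⋯ + μ_{2N-2} ∼ μ_{2N-2} = Γ((2N-1)/β) / β`.
-/

open Filter Topology Finset Matrix
open scoped MatrixOrder

namespace Real

theorem rpow_mul_Gamma_le_Gamma_add {x a : ℝ} (hx : 1 < x) (ha : 0 < a) :
    (x - 1) ^ a * Gamma x ≤ Gamma (x + a) := by
  have hx0 : 0 < x - 1 := by linarith
  have hΓ : ∀ y, 0 < y → 0 < Gamma y := fun y hy => Gamma_pos_of_pos hy
  -- slopes of `log ∘ Γ` increase, and the slope on `[x - 1, x]` is `log (x - 1)`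
  have hslope := convexOn_log_Gamma.slope_mono_adjacent (x := x - 1) (y := x) (z := x + a)
    (Set.mem_Ioi.mpr hx0) (Set.mem_Ioi.mpr (by linarith)) (by linarith) (by linarith)
  have hrec : log (Gamma x) - log (Gamma (x - 1)) = log (x - 1) := by
    rw [← log_div (hΓ x (by linarith)).ne' (hΓ _ hx0).ne']
    congr 1
    rw [div_eq_iff (hΓ _ hx0).ne', ← Gamma_add_one hx0.ne', sub_add_cancel]
  simp only [Function.comp_apply, sub_sub_cancel, div_one, add_sub_cancel_left, hrec,
    le_div_iff₀ ha] at hslope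
  calc (x - 1) ^ a * Gamma x = exp (log (x - 1) * a + log (Gamma x)) := by
        rw [exp_add, exp_log (hΓ x (by linarith)), rpow_def_of_pos hx0]
    _ ≤ exp (log (Gamma (x + a))) := exp_le_exp.mpr (by linarith)
    _ = Gamma (x + a) := exp_log (hΓ _ (by linarith))

theorem tendsto_Gamma_div_Gamma_add_atTop {a : ℝ} (ha : 0 < a) :
    Tendsto (fun x => Gamma x / Gamma (x + a)) atTop (𝓝 0) := by
  have hlim : Tendsto (fun x : ℝ => (x - 1) ^ (-a)) atTop (𝓝 0) :=
    (tendsto_rpow_neg_atTop ha).comp (tendsto_atTop_add_const_right _ (-1) tendsto_id)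
  refine squeeze_zero' ?_ ?_ hlim
  · filter_upwards [eventually_gt_atTop 0] with x hx
    exact div_nonneg (Gamma_pos_of_pos hx).le (Gamma_pos_of_pos (by linarith)).le
  · filter_upwards [eventually_gt_atTop 1] with x hx
    have hx0 : 0 < x - 1 := by linarith
    rw [div_le_iff₀ (Gamma_pos_of_pos (by linarith)), rpow_neg hx0.le, inv_mul_eq_div,
      le_div_iff₀ (rpow_pos_of_pos hx0 a), mul_comm]
    exact rpow_mul_Gamma_le_Gamma_add hx ha

end Real

theorem tendsto_sum_range_div_of_tendsto_div_succ {a : ℕ → ℝ} (ha : ∀ n, 0 < a n)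
    (h : Tendsto (fun n => a n / a (n + 1)) atTop (𝓝 0)) :
    Tendsto (fun n => (∑ i ∈ range n, a i) / a n) atTop (𝓝 0) := by
  set x : ℕ → ℝ := fun n => (∑ i ∈ range n, a i) / a n with hx
  have hx0 : ∀ n, 0 ≤ x n := fun n =>
    div_nonneg (sum_nonneg fun i _ => (ha i).le) (ha n).le
  have hrec : ∀ n, x (n + 1) = (x n + 1) * (a n / a (n + 1)) := by
    intro n
    simp only [hx, sum_range_succ]
    field_simp [(ha n).ne', (ha (n + 1)).ne']
  obtain ⟨n₀, hn₀⟩ := eventually_atTop.mp (h.eventually (eventually_le_nhds one_half_pos))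
  set B := max (x n₀) 1
  -- once the ratios are below `1/2`, the recursion keeps `x` below `max (x n₀) 1`
  have hbdd : ∀ n ≥ n₀, x n ≤ B := by
    intro n hn
    induction n, hn using Nat.le_induction with
    | base => exact le_max_left _ _
    | succ n hn ih =>
      rw [hrec]
      nlinarith [hn₀ n hn, hx0 n, le_max_right (x n₀) 1, div_pos (ha n) (ha (n + 1))]
  have hlim : Tendsto (fun n => (B + 1) * (a n / a (n + 1))) atTop (𝓝 0) := by
    simpa using h.const_mul (B + 1)
  refine (tendsto_add_atTop_iff_nat 1).mp (squeeze_zero' (.of_forall fun n => hx0 _) ?_ hlim)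
  filter_upwards [eventually_ge_atTop n₀] with n hn
  rw [hrec]
  exact mul_le_mul_of_nonneg_right (by linarith [hbdd n hn]) (div_pos (ha n) (ha (n + 1))).le

theorem tendsto_sum_range_succ_div_of_tendsto_div_succ {a : ℕ → ℝ} (ha : ∀ n, 0 < a n)
    (h : Tendsto (fun n => a n / a (n + 1)) atTop (𝓝 0)) :
    Tendsto (fun n => (∑ i ∈ range (n + 1), a i) / a n) atTop (𝓝 1) := by
  have hlim := (tendsto_sum_range_div_of_tendsto_div_succ ha h).add_const 1
  rw [zero_add] at hlim
  refine hlim.congr fun n => ?_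
  rw [sum_range_succ, add_div, div_self (ha n).ne']

theorem Matrix.IsHermitian.apply_le_of_forall_eigenvalue_le {n : Type*} [Fintype n]
    [DecidableEq n] {A : Matrix n n ℝ} (hA : A.IsHermitian) {c : ℝ}
    (h : ∀ (μ : ℝ) (v : n → ℝ), v ≠ 0 → A *ᵥ v = μ • v → μ ≤ c) (i : n) : A i i ≤ c := by
  have hspec : ∀ x ∈ spectrum ℝ A, x ≤ c := by
    rw [hA.spectrum_real_eq_range_eigenvalues]
    rintro _ ⟨j, rfl⟩
    refine h _ _ ?_ (hA.mulVec_eigenvectorBasis j)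
    simpa using hA.eigenvectorBasis.orthonormal.ne_zero j
  -- `A ≤ c • 1` in the Loewner order, and `c • 1 - A` is positive semidefinite
  simpa [sub_nonneg, algebraMap_matrix_apply] using
    (Matrix.le_iff.mp (le_algebraMap_of_spectrum_le hspec)).diag_nonneg (i := i)

theorem Matrix.exists_le_sum_abs_of_mulVec_eq_smul {n : Type*} [Fintype n] [DecidableEq n]
    {A : Matrix n n ℝ} {μ : ℝ} {v : n → ℝ} (hv : v ≠ 0) (h : A *ᵥ v = μ • v) :
    ∃ k, μ ≤ ∑ j, |A k j| := by
  obtain ⟨k, hk⟩ := eigenvalue_mem_ball (Module.End.hasEigenvalue_of_hasEigenvector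
    ⟨Module.End.mem_eigenspace_iff.mpr (by simpa using h), hv⟩)
  refine ⟨k, ?_⟩
  rw [← add_sum_erase _ _ (mem_univ k)]
  have := (abs_sub_le_iff.mp (Metric.mem_closedBall.mp hk)).1
  simp only [Real.norm_eq_abs] at this
  linarith [le_abs_self (A k k)]

def hankelMatrix (f : ℕ → ℝ) (N : ℕ) : Matrix (Fin N) (Fin N) ℝ :=
  Matrix.of fun i j => f (i + j)

theorem hankelMatrix_isHermitian (f : ℕ → ℝ) (N : ℕ) : (hankelMatrix f N).IsHermitian :=
  Matrix.IsHermitian.ext fun i j => by simp [hankelMatrix, add_comm]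

theorem sum_hankelMatrix_row_le {f : ℕ → ℝ} (hf : ∀ s, 0 ≤ f s) {n : ℕ} (k : Fin (n + 1)) :
    ∑ j, hankelMatrix f (n + 1) k j ≤ ∑ s ∈ range (2 * n + 1), f s := by
  calc ∑ j, hankelMatrix f (n + 1) k j
        = ∑ s ∈ (range (n + 1)).map (addLeftEmbedding (k : ℕ)), f s := by
        rw [sum_map, ← Fin.sum_univ_eq_sum_range (fun j => f (addLeftEmbedding (k : ℕ) j))]
        rfl
    _ ≤ ∑ s ∈ range (2 * n + 1), f s := by
        refine sum_le_sum_of_subset_of_nonneg ?_ fun s _ _ => hf s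
        intro s
        simp only [Finset.mem_map, mem_range, addLeftEmbedding_apply]
        have := k.isLt
        omega

theorem le_of_forall_eigenvalue_hankelMatrix_le (f : ℕ → ℝ) {n : ℕ} {c : ℝ}
    (h : ∀ (μ : ℝ) (v : Fin (n + 1) → ℝ), v ≠ 0 → hankelMatrix f (n + 1) *ᵥ v = μ • v → μ ≤ c) :
    f (2 * n) ≤ c := by
  simpa [hankelMatrix, two_mul] using
    (hankelMatrix_isHermitian f (n + 1)).apply_le_of_forall_eigenvalue_le h (Fin.last n)

theorem eigenvalue_hankelMatrix_le_sum {f : ℕ → ℝ} (hf : ∀ s, 0 ≤ f s) {n : ℕ} {μ : ℝ}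
    {v : Fin (n + 1) → ℝ} (hv : v ≠ 0) (h : hankelMatrix f (n + 1) *ᵥ v = μ • v) :
    μ ≤ ∑ s ∈ range (2 * n + 1), f s := by
  obtain ⟨k, hk⟩ := exists_le_sum_abs_of_mulVec_eq_smul hv h
  calc μ ≤ ∑ j, |hankelMatrix f (n + 1) k j| := hk
    _ = ∑ j, hankelMatrix f (n + 1) k j := sum_congr rfl fun j _ => abs_of_nonneg (hf _)
    _ ≤ ∑ s ∈ range (2 * n + 1), f s := sum_hankelMatrix_row_le hf k

/-- The moment `μ_k = ∫₀^∞ x^k e^{-x^β} dx`. -/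
noncomputable def gammaMoment (β : ℝ) (k : ℕ) : ℝ :=
  (1 / β) * Real.Gamma (((k : ℝ) + 1) / β)

theorem gammaMoment_pos {β : ℝ} (hβ : 0 < β) (k : ℕ) : 0 < gammaMoment β k :=
  mul_pos (by positivity) (Real.Gamma_pos_of_pos (by positivity))

theorem tendsto_gammaMoment_div_succ {β : ℝ} (hβ : 0 < β) :
    Tendsto (fun k => gammaMoment β k / gammaMoment β (k + 1)) atTop (𝓝 0) := by
  refine ((Real.tendsto_Gamma_div_Gamma_add_atTop (inv_pos.mpr hβ)).comp
    ((tendsto_atTop_add_const_right _ 1 tendsto_natCast_atTop_atTop).atTop_div_const hβ)).congr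
    fun k => ?_
  simp only [gammaMoment, Function.comp_apply, mul_div_mul_left _ _ (one_div_pos.mpr hβ).ne']
  push_cast
  ring_nf

/-- For every real β > 0, the largest eigenvalue λ_N of the Hankel matrix
H_N = ((1/β)Γ((i+j+1)/β))_{i,j=0}^{N−1} satisfies λ_N ≃ (1/β)·Γ((2N−1)/β)
as N → ∞, i.e. lim_{N→∞} β·λ_N / Γ((2N−1)/β) = 1. -/
theorem hankel_largest_eigenvalue_asymptotics (β : ℝ) (hβ : 0 < β) (lam : ℕ → ℝ)
    (hlam : ∀ N : ℕ, 1 ≤ N →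
      (∃ v : Fin N → ℝ, v ≠ 0 ∧
        (Matrix.of fun i j : Fin N =>
            (1 / β) * Real.Gamma ((((i : ℕ) : ℝ) + ((j : ℕ) : ℝ) + 1) / β)).mulVec v
          = lam N • v) ∧
      (∀ (μ : ℝ) (v : Fin N → ℝ), v ≠ 0 →
        (Matrix.of fun i j : Fin N =>
            (1 / β) * Real.Gamma ((((i : ℕ) : ℝ) + ((j : ℕ) : ℝ) + 1) / β)).mulVec v
          = μ • v → μ ≤ lam N)) :
    Tendsto (fun N : ℕ => β * lam N / Real.Gamma ((2 * (N : ℝ) - 1) / β))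
      atTop (nhds 1) := by
  have hbounds : ∀ n : ℕ,
      gammaMoment β (2 * n) ≤ lam (n + 1) ∧
        lam (n + 1) ≤ ∑ k ∈ range (2 * n + 1), gammaMoment β k := by
    intro n
    have hH : (Matrix.of fun i j : Fin (n + 1) =>
        (1 / β) * Real.Gamma ((((i : ℕ) : ℝ) + ((j : ℕ) : ℝ) + 1) / β)) =
          hankelMatrix (gammaMoment β) (n + 1) := by
      ext i j
      simp [hankelMatrix, gammaMoment]
    obtain ⟨⟨v, hv, hvec⟩, hmax⟩ := hlam (n + 1) n.succ_pos
    rw [hH] at hvec hmax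
    exact ⟨le_of_forall_eigenvalue_hankelMatrix_le _ hmax,
      eigenvalue_hankelMatrix_le_sum (fun k => (gammaMoment_pos hβ k).le) hv hvec⟩
  have hnorm : ∀ n : ℕ, β * lam (n + 1) / Real.Gamma ((2 * ((n + 1 : ℕ) : ℝ) - 1) / β) =
      lam (n + 1) / gammaMoment β (2 * n) := by
    intro n
    have harg : (2 * ((n + 1 : ℕ) : ℝ) - 1) / β = (((2 * n : ℕ) : ℝ) + 1) / β := by
      push_cast; ring
    rw [harg, gammaMoment, div_mul_eq_div_div, div_div_eq_mul_div, div_one, mul_comm]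
  have hsum := (tendsto_sum_range_succ_div_of_tendsto_div_succ (gammaMoment_pos hβ)
    (tendsto_gammaMoment_div_succ hβ)).comp (tendsto_id.const_mul_atTop' two_pos)
  rw [← tendsto_add_atTop_iff_nat 1]
  refine tendsto_of_tendsto_of_tendsto_of_le_of_le tendsto_const_nhds hsum (fun n => ?_) fun n => ?_
  · rw [hnorm, one_le_div (gammaMoment_pos hβ _)]
    exact (hbounds n).1
  · rw [hnorm]
    exact div_le_div_of_nonneg_right (hbounds n).2 (gammaMoment_pos hβ _).le
end

section
/- With E(N) = 2^{−3+4/π} e^{2/π} π^{2/π−1} N^{3/2+1/π} (N+1)^{−1/2+1/π} log(1 + 1/N) and f_2(N) = (1/(12π²))·[ −3π(2 + π − 2 log(4π)) + (log N)² + 3π log(N+1) + (3π − 2 log(N+1)) log N + (log(N+1))² ], the leading-order saddle point value satisfies lim_{N→∞} E(N) · √(2π / f_2(N)) · 4√(log N) / (4π e N)^{2/π} = 1; that is, E(N)√(2π/f_2(N)) ≃ (4π N e)^{2/π} / (4√(log N)) as N → ∞. -/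
open Filter Real

/-- E(N) = e^{−f₀(N)}, the exponential of the zeroth Taylor coefficient at
φ = 0 in the Laplace evaluation of Σ_{j=0}^{N} K_{jj} for the weight e^{−√x}. -/
noncomputable def E (N : ℕ) : ℝ :=
  (2 : ℝ) ^ (-3 + 4 / π) * Real.exp (2 / π) * π ^ (2 / π - 1)
    * (N : ℝ) ^ ((3 : ℝ) / 2 + 1 / π) * ((N : ℝ) + 1) ^ (-(1 : ℝ) / 2 + 1 / π)
    * Real.log (1 + 1 / (N : ℝ))

/-- The second Taylor coefficient at φ = 0 in the Laplace evaluation of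
Σ_{j=0}^{N} K_{jj} for the weight e^{−√x}. -/
noncomputable def f₂ (N : ℕ) : ℝ :=
  (1 / (12 * π ^ 2)) *
    (-3 * π * (2 + π - 2 * Real.log (4 * π)) + (Real.log N) ^ 2
      + 3 * π * Real.log (N + 1)
      + (3 * π - 2 * Real.log (N + 1)) * Real.log N
      + (Real.log (N + 1)) ^ 2)

open Topology

/-! Since `log (N + 1) - log N → 0`, the mixed terms of `f₂ N` collapse to the square of a
vanishing quantity, leaving `f₂ N ~ log N / (2π)`. Collecting the powers of `2`, `π`, `e` and `N`,
`E N / (4πeN)^(2/π) = N log (1 + 1/N) (N/(N+1))^(1/2 - 1/π) / (8π) → 1/(8π)`, and the whole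
expression tends to `(1/(8π)) · 4 · 2π = 1`. -/

lemma f₂_eq_sq_log_sub (N : ℕ) :
    f₂ N = (-3 * π * (2 + π - 2 * log (4 * π)) + (log (N + 1) - log N) ^ 2
      + 3 * π * (log N + log (N + 1))) / (12 * π ^ 2) := by
  unfold f₂; ring

lemma tendsto_f₂_div_log : Tendsto (fun N : ℕ => f₂ N / log N) atTop (𝓝 (1 / (2 * π))) := by
  have hinv : Tendsto (fun N : ℕ => (log N)⁻¹) atTop (𝓝 0) :=
    tendsto_inv_atTop_zero.comp (tendsto_log_atTop.comp tendsto_natCast_atTop_atTop)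
  have hd := tendsto_log_nat_add_one_sub_log
  have hlim := (((tendsto_const_nhds (x := -3 * π * (2 + π - 2 * log (4 * π)))).mul hinv).add
    ((hd.pow 2).mul hinv) |>.add
      ((tendsto_const_nhds (x := 3 * π)).mul ((tendsto_const_nhds (x := (2 : ℝ))).add
        (hd.mul hinv)))).div_const (12 * π ^ 2)
  convert hlim.congr' ?_ using 2
  · field_simp; ring
  filter_upwards [eventually_gt_atTop 1] with N hN
  have hL : log N ≠ 0 := (log_pos (by exact_mod_cast hN)).ne'
  rw [f₂_eq_sq_log_sub]
  field_simp
  ring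

lemma tendsto_sqrt_two_pi_div_f₂_div_log :
    Tendsto (fun N : ℕ => √(2 * π / (f₂ N / log N))) atTop (𝓝 (2 * π)) := by
  have h := ((tendsto_const_nhds (x := 2 * π)).div tendsto_f₂_div_log (by positivity)).sqrt
  convert h using 2
  · rfl
  · rw [div_div_eq_mul_div, div_one, sqrt_mul_self (by positivity)]

lemma E_div_rpow (N : ℕ) (hN : 0 < N) :
    E N / (4 * π * exp 1 * N) ^ (2 / π)
      = N * log (1 + 1 / N) * (N / (N + 1) : ℝ) ^ (1 / 2 - 1 / π) / (8 * π) := by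
  have hn : (0 : ℝ) < N := by exact_mod_cast hN
  have hn1 : (0 : ℝ) < N + 1 := by linarith
  set a : ℝ := 1 / 2 - 1 / π
  have h4 : (4 * π * exp 1 * N) ^ (2 / π)
      = (2 : ℝ) ^ (4 / π) * π ^ (2 / π) * exp (2 / π) * (N : ℝ) ^ (2 / π) := by
    rw [mul_rpow (by positivity) hn.le, mul_rpow (by positivity) (exp_pos 1).le,
      mul_rpow (by norm_num) pi_pos.le, exp_one_rpow, show (4 : ℝ) = 2 ^ (2 : ℝ) by norm_num,
      ← rpow_mul (by norm_num)]
    ring_nf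
  have h2 : (2 : ℝ) ^ (-3 + 4 / π) = 2 ^ (4 / π) / 8 := by
    rw [rpow_add two_pos, rpow_neg two_pos.le]
    norm_num
    ring
  have hπ : π ^ (2 / π - 1) = π ^ (2 / π) / π := by
    rw [rpow_sub pi_pos, rpow_one]
  have hN : (N : ℝ) ^ ((3 : ℝ) / 2 + 1 / π) = N * N ^ a * N ^ (2 / π) := by
    rw [show (3 : ℝ) / 2 + 1 / π = 1 + a + 2 / π by ring, rpow_add hn, rpow_add hn, rpow_one]
  have hN1 : ((N : ℝ) + 1) ^ (-(1 : ℝ) / 2 + 1 / π) = (((N : ℝ) + 1) ^ a)⁻¹ := by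
    rw [show -(1 : ℝ) / 2 + 1 / π = -a by ring, rpow_neg hn1.le]
  unfold E
  rw [h4, h2, hπ, hN, hN1, div_rpow hn.le hn1.le]
  field_simp

lemma sqrt_div_f₂_mul_sqrt_log (N : ℕ) :
    √(2 * π / f₂ N) * √(log N) = √(2 * π / (f₂ N / log N)) := by
  rw [← sqrt_mul' _ (log_natCast_nonneg N), div_div_eq_mul_div, div_mul_eq_mul_div]

/-- The leading-order saddle point value satisfies
lim_{N→∞} E(N)·√(2π/f₂(N))·4√(log N) / (4πeN)^{2/π} = 1, i.e.
E(N)√(2π/f₂(N)) ≃ (4πNe)^{2/π} / (4√(log N)) as N → ∞. -/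
theorem saddle_point_leading_order :
    Tendsto (fun N : ℕ =>
        E N * Real.sqrt (2 * π / f₂ N) * (4 * Real.sqrt (Real.log N))
          / (4 * π * Real.exp 1 * (N : ℝ)) ^ ((2 : ℝ) / π))
      atTop (nhds 1) := by
  have hlog := (tendsto_mul_log_one_add_div_atTop 1).comp tendsto_natCast_atTop_atTop
  have hratio := ((continuousAt_rpow_const 1 (1 / 2 - 1 / π) (Or.inl one_ne_zero)).tendsto.comp
    (tendsto_natCast_div_add_atTop (1 : ℝ)))
  have hlim := ((hlog.mul hratio).div_const (8 * π)).mul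
    (tendsto_sqrt_two_pi_div_f₂_div_log.const_mul 4)
  convert hlim.congr' ?_ using 2
  · rw [one_rpow]; field_simp; norm_num
  filter_upwards [eventually_gt_atTop 0] with N hN
  simp only [Function.comp_apply]
  rw [← sqrt_div_f₂_mul_sqrt_log N, ← E_div_rpow N hN]
  ring
end
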